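/- arXiv:math/0105037 — 6 statements merged into one kernel-verified Lean document; each statement's English description precedes it below -/
import Mathlib

section
/- Let A be a (complex) C*-algebra and let x ∈ A with ‖x‖ = 1. Then x is a partial isometry (i.e., x * star x * x = x) if and only if the set X₁ = {y ∈ A : ∃ a > 0, ‖x + a • y‖ = 1 ∧ ‖x - a • y‖ = 1} equals the set X₂ = {y ∈ A : ∀ b : ℂ, ‖x + b • y‖ = max 1 ‖b • y‖}. -/
section AuxUnital

variable {U : Type*} [CStarAlgebra U] [PartialOrder U] [StarOrderedRing U]

private lemma aux_sq_le [Nontrivial U] (a : U) (ha : 0 ≤ a) : a * a ≤ ‖a‖ • a := by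
  have hsa : IsSelfAdjoint a := ha.isSelfAdjoint
  set n := ‖a‖ with hn
  have key : cfc (fun t : ℝ => t * t) a ≤ cfc (fun t : ℝ => n • t) a := by
    refine cfc_mono fun t ht => ?_
    have h0 : 0 ≤ t := spectrum_nonneg_of_nonneg ha ht
    have h1 : t ≤ n := by
      have := spectrum.norm_le_norm_of_mem ht
      rwa [Real.norm_of_nonneg h0] at this
    simpa [smul_eq_mul] using mul_le_mul_of_nonneg_right h1 h0
  rwa [cfc_mul _ _ a, cfc_smul _ _ a, cfc_id' ℝ a hsa] at key

private lemma aux_orth_norm [Nontrivial U] (a b : U) (ha : 0 ≤ a) (hb : 0 ≤ b)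
    (hab : a * b = 0) : ‖a + b‖ = max ‖a‖ ‖b‖ := by
  have hba : b * a = 0 := by
    have := congrArg star hab
    rwa [star_mul, ha.isSelfAdjoint.star_eq, hb.isSelfAdjoint.star_eq, star_zero] at this
  have hle1 : ‖a‖ ≤ ‖a + b‖ :=
    CStarAlgebra.norm_le_norm_of_nonneg_of_le ha (le_add_of_nonneg_right hb)
  have hle2 : ‖b‖ ≤ ‖a + b‖ :=
    CStarAlgebra.norm_le_norm_of_nonneg_of_le hb (le_add_of_nonneg_left ha)
  refine le_antisymm ?_ (max_le hle1 hle2)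
  set m := max ‖a‖ ‖b‖ with hm
  have hm0 : 0 ≤ m := le_max_of_le_left (norm_nonneg a)
  have habnn : 0 ≤ a + b := add_nonneg ha hb
  have hsqnn : 0 ≤ (a + b) * (a + b) := by
    have := star_mul_self_nonneg (a + b)
    rwa [habnn.isSelfAdjoint.star_eq] at this
  have hsq : (a + b) * (a + b) = a * a + b * b := by
    rw [add_mul, mul_add, mul_add, hab, hba]; abel
  have hkey : (a + b) * (a + b) ≤ m • (a + b) := by
    rw [hsq, smul_add]
    refine add_le_add ((aux_sq_le a ha).trans ?_) ((aux_sq_le b hb).trans ?_)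
    · exact smul_le_smul_of_nonneg_right (le_max_left _ _) ha
    · exact smul_le_smul_of_nonneg_right (le_max_right _ _) hb
  have h1 : ‖(a + b) * (a + b)‖ ≤ ‖m • (a + b)‖ :=
    CStarAlgebra.norm_le_norm_of_nonneg_of_le hsqnn hkey
  rw [norm_smul, Real.norm_of_nonneg hm0] at h1
  have h2 : ‖(a + b) * (a + b)‖ = ‖a + b‖ * ‖a + b‖ := by
    nth_rewrite 1 [← habnn.isSelfAdjoint.star_eq]
    exact CStarRing.norm_star_mul_self
  rw [h2] at h1
  rcases eq_or_lt_of_le (norm_nonneg (a + b)) with h | h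
  · rw [← h]; exact hm0
  · exact le_of_mul_le_mul_right (by linarith) h

private lemma aux_conj_le (C P : U) (hP : 0 ≤ P) (hC : ‖C‖ ≤ 1) (hPP : P * P = P) :
    P * (star C * C) * P ≤ P := by
  have h1 : star P * (star C * C) * P ≤ ‖star C * C‖ • (star P * P) :=
    CStarAlgebra.star_left_conjugate_le_norm_smul (IsSelfAdjoint.star_mul_self C)
  rw [hP.isSelfAdjoint.star_eq, hPP] at h1
  refine h1.trans ?_
  calc ‖star C * C‖ • P ≤ (1 : ℝ) • P := by
        refine smul_le_smul_of_nonneg_right ?_ hP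
        rw [CStarRing.norm_star_mul_self]
        nlinarith [norm_nonneg C]
    _ = P := one_smul _ _

/-- From `‖X ± Z‖ ≤ 1` and `X` a partial isometry, `Z` is "orthogonal" to `X`. -/
private lemma aux_orthogonality (X Z : U) (hX : X * star X * X = X)
    (h1 : ‖X + Z‖ ≤ 1) (h2 : ‖X - Z‖ ≤ 1) :
    Z * (star X * X) = 0 ∧ (X * star X) * Z = 0 := by
  have hPnn : 0 ≤ star X * X := star_mul_self_nonneg X
  have hQnn : 0 ≤ X * star X := mul_star_self_nonneg X
  have hXP : X * (star X * X) = X := by rw [← mul_assoc, hX]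
  have hQX : (X * star X) * X = X := hX
  have hPsX : (star X * X) * star X = star X := by
    have := congrArg star hX
    rw [star_mul, star_mul, star_star] at this
    rwa [← mul_assoc] at this
  have hsXQ : star X * (X * star X) = star X := by
    have := congrArg star hX
    rwa [star_mul, star_mul, star_star] at this
  have hPP : (star X * X) * (star X * X) = star X * X := by
    calc (star X * X) * (star X * X) = ((star X * X) * star X) * X := by noncomm_ring
      _ = star X * X := by rw [hPsX]
  have hQQ : (X * star X) * (X * star X) = X * star X := by
    calc (X * star X) * (X * star X) = ((X * star X) * X) * star X := by noncomm_ring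
      _ = X * star X := by rw [hQX]
  constructor
  · set P := star X * X with hPdef
    have hB : P * (star X * Z) * P = star X * Z * P := by
      calc P * (star X * Z) * P = (P * star X) * (Z * P) := by noncomm_ring
        _ = star X * (Z * P) := by rw [hPsX]
        _ = star X * Z * P := by noncomm_ring
    have hC : P * (star Z * X) * P = P * (star Z * X) := by
      calc P * (star Z * X) * P = (P * star Z) * (X * P) := by noncomm_ring
        _ = (P * star Z) * X := by rw [hXP]
        _ = P * (star Z * X) := by noncomm_ring
    have hDeq : P * (star Z * Z) * P = star (Z * P) * (Z * P) := by
      rw [star_mul, hPnn.isSelfAdjoint.star_eq]; noncomm_ring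
    have hDnn : 0 ≤ P * (star Z * Z) * P := hDeq ▸ star_mul_self_nonneg (Z * P)
    have hPPP : P * P * P = P := by rw [hPP, hPP]
    have expand1 : P * (star (X + Z) * (X + Z)) * P
        = P + (star X * Z * P + P * (star Z * X) + P * (star Z * Z) * P) := by
      have : P * (star (X + Z) * (X + Z)) * P
          = P * P * P + (P * (star X * Z) * P + P * (star Z * X) * P
              + P * (star Z * Z) * P) := by
        rw [star_add, hPdef]; noncomm_ring
      rw [this, hPPP, hB, hC]
    have expand2 : P * (star (X - Z) * (X - Z)) * P
        = P + (-(star X * Z * P) - P * (star Z * X) + P * (star Z * Z) * P) := by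
      have : P * (star (X - Z) * (X - Z)) * P
          = P * P * P + (-(P * (star X * Z) * P) - P * (star Z * X) * P
              + P * (star Z * Z) * P) := by
        rw [star_sub, hPdef]; noncomm_ring
      rw [this, hPPP, hB, hC]
    have e1 := aux_conj_le (X + Z) P hPnn h1 hPP
    have e2 := aux_conj_le (X - Z) P hPnn h2 hPP
    rw [expand1] at e1; rw [expand2] at e2
    have e1' := (add_le_iff_nonpos_right _).mp e1
    have e2' := (add_le_iff_nonpos_right _).mp e2
    have hsum := add_nonpos e1' e2'
    rw [show (star X * Z * P + P * (star Z * X) + P * (star Z * Z) * P)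
        + (-(star X * Z * P) - P * (star Z * X) + P * (star Z * Z) * P)
        = P * (star Z * Z) * P + P * (star Z * Z) * P from by abel] at hsum
    have hD : P * (star Z * Z) * P ≤ 0 :=
      (le_add_of_nonneg_left hDnn).trans hsum
    have : star (Z * P) * (Z * P) = 0 := by rw [← hDeq]; exact le_antisymm hD hDnn
    exact CStarRing.star_mul_self_eq_zero_iff _ |>.mp this
  · set Q := X * star X with hQdef
    have h1' : ‖star (X + Z)‖ ≤ 1 := by rwa [norm_star]
    have h2' : ‖star (X - Z)‖ ≤ 1 := by rwa [norm_star]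
    have hB : Q * (X * star Z) * Q = X * star Z * Q := by
      calc Q * (X * star Z) * Q = (Q * X) * (star Z * Q) := by noncomm_ring
        _ = X * (star Z * Q) := by rw [hQX]
        _ = X * star Z * Q := by noncomm_ring
    have hC : Q * (Z * star X) * Q = Q * (Z * star X) := by
      calc Q * (Z * star X) * Q = (Q * Z) * (star X * Q) := by noncomm_ring
        _ = (Q * Z) * star X := by rw [hsXQ]
        _ = Q * (Z * star X) := by noncomm_ring
    have hDeq : Q * (Z * star Z) * Q = star (star Z * Q) * (star Z * Q) := by
      rw [star_mul, star_star, hQnn.isSelfAdjoint.star_eq]; noncomm_ring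
    have hDnn : 0 ≤ Q * (Z * star Z) * Q := hDeq ▸ star_mul_self_nonneg (star Z * Q)
    have hQQQ : Q * Q * Q = Q := by rw [hQQ, hQQ]
    have expand1 : Q * (star (star (X + Z)) * star (X + Z)) * Q
        = Q + (X * star Z * Q + Q * (Z * star X) + Q * (Z * star Z) * Q) := by
      have : Q * (star (star (X + Z)) * star (X + Z)) * Q
          = Q * Q * Q + (Q * (X * star Z) * Q + Q * (Z * star X) * Q
              + Q * (Z * star Z) * Q) := by
        rw [star_star, star_add, hQdef]; noncomm_ring
      rw [this, hQQQ, hB, hC]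
    have expand2 : Q * (star (star (X - Z)) * star (X - Z)) * Q
        = Q + (-(X * star Z * Q) - Q * (Z * star X) + Q * (Z * star Z) * Q) := by
      have : Q * (star (star (X - Z)) * star (X - Z)) * Q
          = Q * Q * Q + (-(Q * (X * star Z) * Q) - Q * (Z * star X) * Q
              + Q * (Z * star Z) * Q) := by
        rw [star_star, star_sub, hQdef]; noncomm_ring
      rw [this, hQQQ, hB, hC]
    have e1 := aux_conj_le (star (X + Z)) Q hQnn h1' hQQ
    have e2 := aux_conj_le (star (X - Z)) Q hQnn h2' hQQ
    rw [expand1] at e1; rw [expand2] at e2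
    have e1' := (add_le_iff_nonpos_right _).mp e1
    have e2' := (add_le_iff_nonpos_right _).mp e2
    have hsum := add_nonpos e1' e2'
    rw [show (X * star Z * Q + Q * (Z * star X) + Q * (Z * star Z) * Q)
        + (-(X * star Z * Q) - Q * (Z * star X) + Q * (Z * star Z) * Q)
        = Q * (Z * star Z) * Q + Q * (Z * star Z) * Q from by abel] at hsum
    have hD : Q * (Z * star Z) * Q ≤ 0 :=
      (le_add_of_nonneg_left hDnn).trans hsum
    have h0 : star (star Z * Q) * (star Z * Q) = 0 := by
      rw [← hDeq]; exact le_antisymm hD hDnn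
    have h0' := CStarRing.star_mul_self_eq_zero_iff _ |>.mp h0
    have hQZ : star (star Z * Q) = Q * Z := by
      rw [star_mul, star_star, hQnn.isSelfAdjoint.star_eq]
    rw [← hQZ, h0', star_zero]

private lemma aux_norm_max [Nontrivial U] (X W : U) (hX : X * star X * X = X) (hXn : ‖X‖ = 1)
    (h1 : W * (star X * X) = 0) (h2 : (X * star X) * W = 0) :
    ‖X + W‖ = max 1 ‖W‖ := by
  have hsXQ : star X * (X * star X) = star X := by
    have := congrArg star hX
    rwa [star_mul, star_mul, star_star] at this
  have hsXW : star X * W = 0 := by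
    calc star X * W = (star X * (X * star X)) * W := by rw [hsXQ]
      _ = star X * ((X * star X) * W) := by noncomm_ring
      _ = 0 := by rw [h2, mul_zero]
  have hsWX : star W * X = 0 := by
    have := congrArg star hsXW
    rwa [star_mul, star_star, star_zero] at this
  have hdecomp : star (X + W) * (X + W) = star X * X + star W * W := by
    have : star (X + W) * (X + W)
        = star X * X + (star X * W + (star W * X + star W * W)) := by
      rw [star_add]; noncomm_ring
    rw [this, hsXW, hsWX]; abel
  have horth : (star X * X) * (star W * W) = 0 := by
    have hWP : (star X * X) * star W = 0 := by
      have := congrArg star h1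
      rwa [star_mul, star_mul, star_star, star_zero] at this
    calc (star X * X) * (star W * W) = ((star X * X) * star W) * W := by noncomm_ring
      _ = 0 := by rw [hWP, zero_mul]
  have hnP : ‖star X * X‖ = 1 := by
    rw [CStarRing.norm_star_mul_self, hXn]; norm_num
  have hnW : ‖star W * W‖ = ‖W‖ * ‖W‖ := CStarRing.norm_star_mul_self
  have hmax := aux_orth_norm (star X * X) (star W * W)
    (star_mul_self_nonneg X) (star_mul_self_nonneg W) horth
  rw [hnP, hnW, ← hdecomp] at hmax
  have hsq : ‖X + W‖ * ‖X + W‖ = max 1 (‖W‖ * ‖W‖) := by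
    rw [← CStarRing.norm_star_mul_self, hmax]
  have h1' : (0:ℝ) ≤ ‖X + W‖ := norm_nonneg _
  have h2' : (0:ℝ) ≤ ‖W‖ := norm_nonneg _
  rcases le_total ‖W‖ 1 with h | h
  · rw [max_eq_left (by nlinarith)] at hsq
    rw [max_eq_left h]
    nlinarith
  · rw [max_eq_right (by nlinarith)] at hsq
    rw [max_eq_right h]
    nlinarith

omit [PartialOrder U] [StarOrderedRing U] in
private lemma aux_cfc_normsq [Nontrivial U] (X : U) (g : ℝ → ℝ) (hg : Continuous g) :
    ‖X * cfc g (star X * X)‖ ^ 2 = ‖cfc (fun t : ℝ => t * g t ^ 2) (star X * X)‖ := by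
  have hPsa : IsSelfAdjoint (star X * X) := IsSelfAdjoint.star_mul_self X
  have hGsa : IsSelfAdjoint (cfc g (star X * X)) := cfc_predicate g (star X * X)
  set P := star X * X with hPdef
  set G := cfc g P with hGdef
  have h1 : star (X * G) * (X * G) = G * P * G := by
    rw [star_mul, hGsa.star_eq, hPdef]; noncomm_ring
  have h2 : G * P * G = cfc (fun t : ℝ => g t * t * g t) P := by
    calc G * P * G = cfc g P * cfc (fun t : ℝ => t) P * cfc g P := by rw [cfc_id' ℝ P hPsa]
      _ = cfc (fun t : ℝ => g t * t) P * cfc g P := by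
          rw [cfc_mul g (fun t : ℝ => t) P hg.continuousOn (continuous_id.continuousOn)]
      _ = cfc (fun t : ℝ => g t * t * g t) P := by
          rw [cfc_mul (fun t : ℝ => g t * t) g P (by fun_prop) hg.continuousOn]
  have h3 : cfc (fun t : ℝ => g t * t * g t) P = cfc (fun t : ℝ => t * g t ^ 2) P :=
    cfc_congr fun t _ => by ring
  rw [pow_two, ← CStarRing.norm_star_mul_self, h1, h2, h3]

end AuxUnital

set_option maxHeartbeats 2000000 in
/-- Theorem 1: geometric characterization of partial isometries. -/
theorem partialIsometry_iff_X1_eq_X2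
    {A : Type*} [NonUnitalCStarAlgebra A] (x : A) (hx : ‖x‖ = 1) :
    x * star x * x = x ↔
      {y : A | ∃ a : ℝ, 0 < a ∧ ‖x + (a : ℂ) • y‖ = 1 ∧ ‖x - (a : ℂ) • y‖ = 1} =
      {y : A | ∀ b : ℂ, ‖x + b • y‖ = max 1 ‖b • y‖} := by
  letI : PartialOrder (Unitization ℂ A) := CStarAlgebra.spectralOrder _
  haveI : StarOrderedRing (Unitization ℂ A) := CStarAlgebra.spectralOrderedRing _
  set X : Unitization ℂ A := (x : Unitization ℂ A) with hX
  have hXn : ‖X‖ = 1 := by rw [hX, Unitization.norm_inr, hx]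
  constructor
  · -- forward direction
    intro hpi
    have hXpi : X * star X * X = X := by
      have : ((x * star x * x : A) : Unitization ℂ A) = X * star X * X := by
        simp only [Unitization.inr_mul, Unitization.inr_star, hX]
      rw [← this, hpi]
    apply Set.Subset.antisymm
    · -- X₁ ⊆ X₂
      rintro y ⟨a, ha, h1, h2⟩ b
      set Y : Unitization ℂ A := (y : Unitization ℂ A) with hY
      have horth := aux_orthogonality X ((a : ℂ) • Y) hXpi ?_ ?_
      · have hYP : Y * (star X * X) = 0 := by
          have := horth.1
          rw [smul_mul_assoc] at this
          exact (smul_eq_zero_iff_right (by exact_mod_cast ne_of_gt ha)).mp this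
        have hQY : (X * star X) * Y = 0 := by
          have := horth.2
          rw [mul_smul_comm] at this
          exact (smul_eq_zero_iff_right (by exact_mod_cast ne_of_gt ha)).mp this
        have hmax := aux_norm_max X (b • Y) hXpi hXn
          (by rw [smul_mul_assoc, hYP, smul_zero])
          (by rw [mul_smul_comm, hQY, smul_zero])
        have hcoe : ((x + b • y : A) : Unitization ℂ A) = X + b • Y := by
          simp only [Unitization.inr_add, Unitization.inr_smul, hX, hY]
        have hcoe2 : ((b • y : A) : Unitization ℂ A) = b • Y := by
          simp only [Unitization.inr_smul, hY]
        calc ‖x + b • y‖ = ‖X + b • Y‖ := by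
              rw [← Unitization.norm_inr (𝕜 := ℂ) (x + b • y), hcoe]
          _ = max 1 ‖b • Y‖ := hmax
          _ = max 1 ‖b • y‖ := by rw [← hcoe2, Unitization.norm_inr]
      · have : ((x + (a:ℂ) • y : A) : Unitization ℂ A) = X + (a : ℂ) • Y := by
          simp only [Unitization.inr_add, Unitization.inr_smul, hX, hY]
        rw [← this, Unitization.norm_inr, h1]
      · have : ((x - (a:ℂ) • y : A) : Unitization ℂ A) = X - (a : ℂ) • Y := by
          simp only [Unitization.inr_sub, Unitization.inr_smul, hX, hY]
        rw [← this, Unitization.norm_inr, h2]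
    · -- X₂ ⊆ X₁
      rintro y hy
      set a : ℝ := (1 + ‖y‖)⁻¹ with hadef
      have hapos : 0 < a := by positivity
      have hcnorm : ‖(a : ℂ)‖ = a := by
        rw [show ‖(a : ℂ)‖ = |a| from by simp, abs_of_pos hapos]
      have hale : a * ‖y‖ ≤ 1 := by
        rw [hadef, inv_mul_le_iff₀ (by positivity)]
        linarith [norm_nonneg y]
      refine ⟨a, hapos, ?_, ?_⟩
      · have hb := hy ((a : ℂ))
        rw [hb, norm_smul, hcnorm]
        exact max_eq_left hale
      · have hb := hy (-(a : ℂ))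
        rw [sub_eq_add_neg, ← neg_smul, hb, norm_smul, norm_neg, hcnorm]
        exact max_eq_left hale
  · -- reverse direction
    intro hsets
    by_contra hpi
    set p : A := star x * x with hp
    have hpsa : IsSelfAdjoint p := IsSelfAdjoint.star_mul_self x
    set P : Unitization ℂ A := (p : Unitization ℂ A) with hPdef
    have hPX : P = star X * X := by
      rw [hPdef, hp]; simp only [Unitization.inr_mul, Unitization.inr_star, hX]
    have hPsa : IsSelfAdjoint P := by rw [hPX]; exact IsSelfAdjoint.star_mul_self X
    have hPnn : 0 ≤ P := by rw [hPX]; exact star_mul_self_nonneg X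
    have hPn : ‖P‖ = 1 := by
      rw [hPdef, Unitization.norm_inr, hp, CStarRing.norm_star_mul_self, hx]; norm_num
    set K := spectrum ℝ P with hK
    have h1K : (1:ℝ) ∈ K := by
      have := CStarAlgebra.norm_mem_spectrum_of_nonneg hPnn
      rwa [hPn] at this
    have hK0 : ∀ t ∈ K, (0:ℝ) ≤ t := fun t ht => spectrum_nonneg_of_nonneg hPnn ht
    have hK1 : ∀ t ∈ K, t ≤ 1 := by
      intro t ht
      have := spectrum.norm_le_norm_of_mem ht
      rw [hPn] at this
      exact (Real.le_norm_self t).trans this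
    -- there is a spectral value strictly between 0 and 1
    obtain ⟨s₀, hs₀K, hs₀ne⟩ : ∃ s ∈ K, s * s ≠ s := by
      by_contra hcon
      push_neg at hcon
      have hPP : P * P = P := by
        calc P * P = cfc (fun t : ℝ => t) P * cfc (fun t : ℝ => t) P := by
              rw [cfc_id' ℝ P hPsa]
          _ = cfc (fun t : ℝ => t * t) P := by
              rw [cfc_mul (fun t : ℝ => t) (fun t : ℝ => t) P]
          _ = cfc (fun t : ℝ => t) P := cfc_congr fun t ht => hcon t ht
          _ = P := cfc_id' ℝ P hPsa
      have hpp : p * p = p := by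
        apply Unitization.inr_injective (R := ℂ)
        rw [Unitization.inr_mul]
        exact hPP
      apply hpi
      have hd : star (x * star x * x - x) * (x * star x * x - x)
          = (star x * x) * (star x * x) * (star x * x) - (star x * x) * (star x * x)
            - (star x * x) * (star x * x) + star x * x := by
        simp only [star_sub, star_mul, star_star]
        noncomm_ring
      rw [← hp, hpp, hpp] at hd
      have hd0 : star (x * star x * x - x) * (x * star x * x - x) = 0 := by
        rw [hd]; abel
      have := CStarRing.star_mul_self_eq_zero_iff _ |>.mp hd0
      exact sub_eq_zero.mp this
    have hs₀0 : 0 < s₀ := by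
      rcases eq_or_lt_of_le (hK0 s₀ hs₀K) with h | h
      · exact absurd (by rw [← h]; ring) hs₀ne
      · exact h
    have hs₀1 : s₀ < 1 := by
      rcases eq_or_lt_of_le (hK1 s₀ hs₀K) with h | h
      · exact absurd (by rw [h]; ring) hs₀ne
      · exact h
    set ε : ℝ := min s₀ (1 - s₀) / 2 with hεdef
    have hε : 0 < ε := by
      have : 0 < min s₀ (1 - s₀) := lt_min hs₀0 (by linarith)
      positivity
    have hεs : ε ≤ s₀ / 2 := by
      rw [hεdef]; gcongr; exact min_le_left _ _
    have hεs' : ε ≤ (1 - s₀) / 2 := by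
      rw [hεdef]; gcongr; exact min_le_right _ _
    have hεhalf : ε ≤ 1 / 2 := by linarith
    set f : ℝ → ℝ := fun t => max 0 (ε - |t - s₀|) with hfdef
    have hf : Continuous f := by fun_prop
    have hf0 : f 0 = 0 := by
      rw [hfdef]
      refine max_eq_left ?_
      rw [zero_sub, abs_neg, abs_of_pos hs₀0]
      linarith
    have hf1 : f 1 = 0 := by
      rw [hfdef]
      refine max_eq_left ?_
      rw [abs_of_pos (by linarith : (0:ℝ) < 1 - s₀)]
      linarith
    have hfs₀ : f s₀ = ε := by
      rw [hfdef]; simp [hε.le]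
    have hfnn : ∀ t, 0 ≤ f t := fun t => le_max_left _ _
    have hfle : ∀ t, f t ≤ ε := fun t => max_le hε.le (by linarith [abs_nonneg (t - s₀)])
    have hfsupp : ∀ t, 0 < f t → t ≤ 1 - ε := by
      intro t h
      have h' : 0 < ε - |t - s₀| := by
        rcases lt_max_iff.mp h with h | h
        · exact absurd h (lt_irrefl 0)
        · exact h
      have := le_abs_self (t - s₀)
      linarith
    set y : A := x * cfcₙ f p with hy
    -- key norm computations
    have hkeyA : ∀ g : ℝ → ℝ, Continuous g → g 0 = 0 →
        ‖x + x * cfcₙ g p‖ ^ 2 = ‖cfc (fun t : ℝ => t * (1 + g t) ^ 2) P‖ := by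
      intro g hg hg0
      have hcfc1 : cfc (fun t : ℝ => 1 + g t) P = 1 + cfc g P := by
        rw [cfc_const_add (1:ℝ) g P hg.continuousOn hPsa, map_one]
      have hcoe : ((x + x * cfcₙ g p : A) : Unitization ℂ A) = X * cfc (fun t : ℝ => 1 + g t) P := by
        rw [hcfc1, mul_add, mul_one]
        simp only [Unitization.inr_add, Unitization.inr_mul]
        rw [Unitization.real_cfcₙ_eq_cfc_inr p g hg0]
      have haux := aux_cfc_normsq X (fun t : ℝ => 1 + g t) (by fun_prop)
      rw [← hPX] at haux
      calc ‖x + x * cfcₙ g p‖ ^ 2 = ‖X * cfc (fun t : ℝ => 1 + g t) P‖ ^ 2 := by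
            rw [← Unitization.norm_inr (𝕜 := ℂ) (x + x * cfcₙ g p), hcoe]
        _ = ‖cfc (fun t : ℝ => t * (1 + g t) ^ 2) P‖ := haux
    have hkeyB : ‖y‖ ^ 2 = ‖cfc (fun t : ℝ => t * f t ^ 2) P‖ := by
      have hcoe : ((y : A) : Unitization ℂ A) = X * cfc f P := by
        rw [hy]
        simp only [Unitization.inr_mul]
        rw [Unitization.real_cfcₙ_eq_cfc_inr p f hf0]
      have haux := aux_cfc_normsq X f hf
      rw [← hPX] at haux
      calc ‖y‖ ^ 2 = ‖X * cfc f P‖ ^ 2 := by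
            rw [← Unitization.norm_inr (𝕜 := ℂ) y, hcoe]
        _ = ‖cfc (fun t : ℝ => t * f t ^ 2) P‖ := haux
    -- norm evaluation helper
    have hNormEval : ∀ h : ℝ → ℝ, Continuous h → ∀ c : ℝ, 0 ≤ c →
        (∀ t ∈ K, |h t| ≤ c) → ∀ t₁, t₁ ∈ K → h t₁ = c → ‖cfc h P‖ = c := by
      intro h hh c hc hub t₁ ht₁ hval
      refine le_antisymm (norm_cfc_le hc fun t ht => by
        rw [Real.norm_eq_abs]; exact hub t ht) ?_
      have := norm_apply_le_norm_cfc h P ht₁ hh.continuousOn hPsa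
      rwa [hval, Real.norm_of_nonneg hc] at this
    -- the bound for membership in X₁
    have hbound : ∀ t ∈ K, ∀ c : ℝ, |c| ≤ ε * f t → t * (1 + c) ^ 2 ≤ 1 := by
      intro t ht c hc
      rcases eq_or_lt_of_le (hfnn t) with h0 | h0
      · have hc0 : c = 0 := by
          have h1 : ε * f t = 0 := by rw [← h0, mul_zero]
          have := abs_nonneg c
          have := hc
          rw [h1] at this
          linarith [abs_nonneg c, le_abs_self c, neg_abs_le c,
            abs_eq_zero.mp (le_antisymm this (abs_nonneg c))]
        rw [hc0]
        simpa using hK1 t ht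
      · have ht1 : t ≤ 1 - ε := hfsupp t h0
        have hft : f t ≤ ε := hfle t
        have habs : |c| ≤ ε * ε := hc.trans (mul_le_mul_of_nonneg_left hft hε.le)
        have h2 : (1 + c) ^ 2 ≤ (1 + ε * ε) ^ 2 := by
          nlinarith [le_abs_self c, neg_abs_le c, abs_nonneg c]
        have ht0 : 0 ≤ t := hK0 t ht
        have hkey : (1 - ε) * (1 + ε * ε) ^ 2 ≤ 1 := by nlinarith [hε.le, hεhalf, sq_nonneg ε, sq_nonneg (ε*ε)]
        calc t * (1 + c) ^ 2 ≤ (1 - ε) * (1 + c) ^ 2 := by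
              apply mul_le_mul_of_nonneg_right ht1 (sq_nonneg _)
          _ ≤ (1 - ε) * (1 + ε * ε) ^ 2 := by
              apply mul_le_mul_of_nonneg_left h2 (by linarith)
          _ ≤ 1 := hkey
    -- membership machinery
    have hmem : ∀ g : ℝ → ℝ, Continuous g → g 0 = 0 → g 1 = 0 →
        (∀ t ∈ K, t * (1 + g t) ^ 2 ≤ 1) → ‖x + x * cfcₙ g p‖ = 1 := by
      intro g hg hg0 hg1 hb
      have h := hkeyA g hg hg0
      have heval : ‖cfc (fun t : ℝ => t * (1 + g t) ^ 2) P‖ = 1 := by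
        refine hNormEval _ (by fun_prop) 1 zero_le_one ?_ 1 h1K ?_
        · intro t ht
          rw [abs_of_nonneg (mul_nonneg (hK0 t ht) (sq_nonneg _))]
          exact hb t ht
        · rw [hg1]; norm_num
      rw [heval] at h
      nlinarith [norm_nonneg (x + x * cfcₙ g p)]
    -- y ∈ X₁
    have hsmul : ∀ r : ℝ, x + (r : ℂ) • y = x + x * cfcₙ (fun t => r * f t) p := by
      intro r
      congr 1
      rw [hy, Complex.coe_smul, ← mul_smul_comm]
      congr 1
      rw [← cfcₙ_smul r f p]
      simp [smul_eq_mul]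
    have hyX1 : y ∈ {y : A | ∃ a : ℝ, 0 < a ∧ ‖x + (a : ℂ) • y‖ = 1 ∧ ‖x - (a : ℂ) • y‖ = 1} := by
      refine ⟨ε, hε, ?_, ?_⟩
      · rw [hsmul ε]
        refine hmem _ (by fun_prop) (by simp [hf0]) (by simp [hf1]) ?_
        intro t ht
        exact hbound t ht (ε * f t) (by
          rw [abs_of_nonneg (mul_nonneg hε.le (hfnn t))])
      · have : x - (ε : ℂ) • y = x + ((-ε : ℝ) : ℂ) • y := by
          push_cast
          rw [sub_eq_add_neg, neg_smul]
        rw [this, hsmul (-ε)]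
        refine hmem _ (by fun_prop) (by simp [hf0]) (by simp [hf1]) ?_
        intro t ht
        have := hbound t ht (-ε * f t) (by
          rw [abs_mul, abs_neg, abs_of_pos hε, abs_of_nonneg (hfnn t)])
        exact this
    -- y ∈ X₂ by the set equality
    have hyX2 : ∀ b : ℂ, ‖x + b • y‖ = max 1 ‖b • y‖ := by
      have := hsets ▸ hyX1
      exact this
    -- derive a contradiction
    have hφcont : Continuous (fun t : ℝ => t * f t ^ 2) := by fun_prop
    have hKcpt : IsCompact K := ContinuousFunctionalCalculus.isCompact_spectrum P
    obtain ⟨t₀, ht₀K, ht₀max⟩ :=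
      hKcpt.exists_isMaxOn ⟨1, h1K⟩ hφcont.continuousOn
    have hMub : ∀ t ∈ K, t * f t ^ 2 ≤ t₀ * f t₀ ^ 2 := fun t ht => ht₀max ht
    have hMpos : 0 < t₀ * f t₀ ^ 2 := by
      have h1 : 0 < s₀ * f s₀ ^ 2 := by
        rw [hfs₀]; positivity
      exact lt_of_lt_of_le h1 (hMub s₀ hs₀K)
    have hynorm : ‖y‖ ^ 2 = t₀ * f t₀ ^ 2 := by
      rw [hkeyB]
      refine hNormEval _ hφcont _ hMpos.le ?_ t₀ ht₀K rfl
      intro t ht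
      rw [abs_of_nonneg (mul_nonneg (hK0 t ht) (sq_nonneg _))]
      exact hMub t ht
    have hypos : 0 < ‖y‖ := by
      by_contra h
      push_neg at h
      have : ‖y‖ = 0 := le_antisymm h (norm_nonneg y)
      rw [this] at hynorm
      nlinarith
    set B : ℝ := 1 / ‖y‖ + 1 with hBdef
    have hB : 0 < B := by positivity
    have hBny : ‖((B : ℝ) : ℂ) • y‖ = B * ‖y‖ := by
      rw [norm_smul]
      congr 1
      simp [abs_of_pos hB]
    have hBge : 1 ≤ B * ‖y‖ := by
      have h' : B * ‖y‖ = 1 + ‖y‖ := by rw [hBdef]; field_simp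
      rw [h']; linarith [norm_nonneg y]
    have hupper : ‖x + ((B : ℝ) : ℂ) • y‖ = B * ‖y‖ := by
      rw [hyX2 ((B : ℝ) : ℂ), hBny, max_eq_right hBge]
    have hlower : t₀ * (1 + B * f t₀) ^ 2 ≤ ‖x + ((B : ℝ) : ℂ) • y‖ ^ 2 := by
      rw [hsmul B, hkeyA (fun t => B * f t) (by fun_prop) (by simp [hf0])]
      have := norm_apply_le_norm_cfc (fun t : ℝ => t * (1 + B * f t) ^ 2) P ht₀K
        (by fun_prop) hPsa
      calc t₀ * (1 + B * f t₀) ^ 2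
          ≤ |t₀ * (1 + B * f t₀) ^ 2| := le_abs_self _
        _ = ‖t₀ * (1 + B * f t₀) ^ 2‖ := (Real.norm_eq_abs _).symm
        _ ≤ _ := this
    rw [hupper] at hlower
    have hft₀ : 0 ≤ f t₀ := hfnn t₀
    have ht₀pos : 0 < t₀ := by nlinarith [sq_nonneg (f t₀)]
    nlinarith [mul_nonneg (mul_nonneg hB.le ht₀pos.le) hft₀, hynorm]
end

section
/- Let A be a (complex) C*-algebra and let x, y ∈ A satisfy star x * y = 0 and y * star x = 0. Then ‖x + y‖ = max ‖x‖ ‖y‖. -/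
private lemma add_pow_orth {E : Type*} [Ring E] {a b : E}
    (hab : a * b = 0) (hba : b * a = 0) :
    ∀ n : ℕ, (a + b) ^ (n + 1) = a ^ (n + 1) + b ^ (n + 1) := by
  intro n
  induction n with
  | zero => simp
  | succ k ih =>
    have h1 : a ^ (k + 1) * b = 0 := by
      rw [pow_succ, mul_assoc, hab, mul_zero]
    have h2 : b ^ (k + 1) * a = 0 := by
      rw [pow_succ, mul_assoc, hba, mul_zero]
    calc (a + b) ^ (k + 2) = (a + b) ^ (k + 1) * (a + b) := by rw [pow_succ]
      _ = (a ^ (k + 1) + b ^ (k + 1)) * (a + b) := by rw [ih]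
      _ = a ^ (k + 2) + b ^ (k + 2) := by
          rw [add_mul, mul_add, mul_add, h1, h2, ← pow_succ, ← pow_succ]
          abel

private lemma norm_add_le_max_of_orth_unital {E : Type*} [NormedRing E] [StarRing E]
    [CStarRing E] {a b : E} (ha : IsSelfAdjoint a) (hb : IsSelfAdjoint b)
    (hab : a * b = 0) (hba : b * a = 0) :
    ‖a + b‖ ≤ max ‖a‖ ‖b‖ := by
  set M : ℝ := max ‖a‖ ‖b‖ with hM
  have hM0 : 0 ≤ M := le_trans (norm_nonneg a) (le_max_left _ _)
  have hc : IsSelfAdjoint (a + b) := ha.add hb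
  have key : ∀ k : ℕ, ‖a + b‖ ^ (2 ^ k) ≤ 2 * M ^ (2 ^ k) := by
    intro k
    obtain ⟨m, hm⟩ : ∃ m, 2 ^ k = m + 1 :=
      ⟨2 ^ k - 1, (Nat.succ_pred_eq_of_pos (Nat.pow_pos (n := k) (by norm_num))).symm⟩
    have hpow : (a + b) ^ (2 ^ k) = a ^ (2 ^ k) + b ^ (2 ^ k) := by
      rw [hm]; exact add_pow_orth hab hba m
    have h1 : ‖(a + b) ^ (2 ^ k)‖ = ‖a + b‖ ^ (2 ^ k) := by
      have := hc.nnnorm_pow_two_pow (E := E) k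
      simpa using congrArg NNReal.toReal this
    calc ‖a + b‖ ^ (2 ^ k) = ‖(a + b) ^ (2 ^ k)‖ := h1.symm
      _ = ‖a ^ (2 ^ k) + b ^ (2 ^ k)‖ := by rw [hpow]
      _ ≤ ‖a ^ (2 ^ k)‖ + ‖b ^ (2 ^ k)‖ := norm_add_le _ _
      _ ≤ ‖a‖ ^ (2 ^ k) + ‖b‖ ^ (2 ^ k) := by
          gcongr <;> exact norm_pow_le' _ (Nat.pow_pos (n := k) (by norm_num))
      _ ≤ M ^ (2 ^ k) + M ^ (2 ^ k) :=
          add_le_add (pow_le_pow_left₀ (norm_nonneg _) (le_max_left _ _) _)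
            (pow_le_pow_left₀ (norm_nonneg _) (le_max_right _ _) _)
      _ = 2 * M ^ (2 ^ k) := by ring
  by_contra hlt
  push_neg at hlt
  have hM0' : 0 < ‖a + b‖ := lt_of_le_of_lt hM0 hlt
  rcases eq_or_lt_of_le hM0 with hM0e | hMpos
  · have h := key 0
    rw [pow_zero, pow_one, pow_one, ← hM0e] at h
    linarith
  · set r : ℝ := ‖a + b‖ / M with hr
    have hr1 : 1 < r := (one_lt_div hMpos).mpr hlt
    have hrk : ∀ k : ℕ, r ^ (2 ^ k) ≤ 2 := by
      intro k
      rw [hr, div_pow, div_le_iff₀ (by positivity)]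
      exact key k
    obtain ⟨k, hk⟩ := exists_nat_gt (1 / (r - 1))
    have h2k : (k : ℝ) ≤ 2 ^ k := by exact_mod_cast Nat.le_of_lt (Nat.lt_two_pow_self (n := k))
    have hgrow : 1 + (2 ^ k : ℝ) * (r - 1) ≤ r ^ (2 ^ k) := by
      have := one_add_mul_le_pow (a := r - 1) (by linarith) (2 ^ k)
      simpa using this
    have hlt2 : (2 : ℝ) < 1 + (2 ^ k : ℝ) * (r - 1) := by
      have h1 : 1 / (r - 1) < (2 : ℝ) ^ k := lt_of_lt_of_le hk h2k
      have h2 : 1 < (2 : ℝ) ^ k * (r - 1) := by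
        rw [div_lt_iff₀ (by linarith)] at h1
        linarith
      linarith
    have := lt_of_lt_of_le hlt2 (hgrow.trans (hrk k))
    linarith

private lemma norm_add_le_max_of_orth {A : Type*} [NonUnitalCStarAlgebra A]
    {a b : A} (ha : IsSelfAdjoint a) (hb : IsSelfAdjoint b)
    (hab : a * b = 0) (hba : b * a = 0) :
    ‖a + b‖ ≤ max ‖a‖ ‖b‖ := by
  have key := norm_add_le_max_of_orth_unital (E := Unitization ℂ A)
    (a := (a : Unitization ℂ A)) (b := (b : Unitization ℂ A)) (ha.inr ℂ) (hb.inr ℂ)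
    (by rw [← Unitization.inr_mul, hab, Unitization.inr_zero])
    (by rw [← Unitization.inr_mul, hba, Unitization.inr_zero])
  rwa [← Unitization.inr_add, Unitization.norm_inr, Unitization.norm_inr,
    Unitization.norm_inr] at key

/-- Key norm computation: if the supports of `x` and `y` are orthogonal,
then `‖x + y‖ = max ‖x‖ ‖y‖`. -/
theorem norm_add_eq_max_of_orthogonal_supports
    {A : Type*} [NonUnitalCStarAlgebra A] (x y : A)
    (h1 : star x * y = 0) (h2 : y * star x = 0) :
    ‖x + y‖ = max ‖x‖ ‖y‖ := by
  have hxy : x * star y = 0 := by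
    have := congrArg star h2
    simpa [star_mul] using this
  have hyx : star y * x = 0 := by
    have := congrArg star h1
    simpa [star_mul] using this
  have hprod : (x + y) * star (x + y) = x * star x + y * star y := by
    rw [star_add, add_mul, mul_add, mul_add, hxy, h2]
    abel
  set a := x * star x with ha'
  set b := y * star y with hb'
  have hab : a * b = 0 := by
    rw [ha', hb', mul_assoc, ← mul_assoc (star x) y, h1, zero_mul, mul_zero]
  have hba : b * a = 0 := by
    rw [hb', ha', mul_assoc, ← mul_assoc (star y) x, hyx, zero_mul, mul_zero]
  have hna : ‖a‖ = ‖x‖ * ‖x‖ := CStarRing.norm_self_mul_star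
  have hnb : ‖b‖ = ‖y‖ * ‖y‖ := CStarRing.norm_self_mul_star
  have hsum : ‖x + y‖ * ‖x + y‖ = ‖a + b‖ := by
    rw [← CStarRing.norm_self_mul_star (x := x + y), hprod]
  have hub : ‖a + b‖ ≤ max ‖a‖ ‖b‖ :=
    norm_add_le_max_of_orth (IsSelfAdjoint.mul_star_self x) (IsSelfAdjoint.mul_star_self y) hab hba
  have hlbx : ‖x‖ ≤ ‖x + y‖ := by
    have h : star x * (x + y) = star x * x := by rw [mul_add, h1, add_zero]
    have hnorm : ‖x‖ * ‖x‖ = ‖star x * (x + y)‖ := by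
      rw [h, CStarRing.norm_star_mul_self]
    have hle : ‖star x * (x + y)‖ ≤ ‖x‖ * ‖x + y‖ := by
      calc ‖star x * (x + y)‖ ≤ ‖star x‖ * ‖x + y‖ := norm_mul_le _ _
        _ = ‖x‖ * ‖x + y‖ := by rw [norm_star]
    rcases eq_or_lt_of_le (norm_nonneg x) with h0 | h0
    · rw [← h0]; exact norm_nonneg _
    · exact le_of_mul_le_mul_left (hnorm.le.trans hle) h0
  have hlby : ‖y‖ ≤ ‖x + y‖ := by
    have h : (x + y) * star y = y * star y := by rw [add_mul, hxy, zero_add]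
    have hnorm : ‖y‖ * ‖y‖ = ‖(x + y) * star y‖ := by
      rw [h, CStarRing.norm_self_mul_star]
    have hle : ‖(x + y) * star y‖ ≤ ‖x + y‖ * ‖y‖ := by
      calc ‖(x + y) * star y‖ ≤ ‖x + y‖ * ‖star y‖ := norm_mul_le _ _
        _ = ‖x + y‖ * ‖y‖ := by rw [norm_star]
    rcases eq_or_lt_of_le (norm_nonneg y) with h0 | h0
    · rw [← h0]; exact norm_nonneg _
    · exact le_of_mul_le_mul_right (hnorm.le.trans hle) h0
  apply le_antisymm
  · have hmax : max ‖a‖ ‖b‖ = max ‖x‖ ‖y‖ * max ‖x‖ ‖y‖ := by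
      rw [hna, hnb]
      rcases le_total ‖x‖ ‖y‖ with h | h
      · rw [max_eq_right h, max_eq_right (by nlinarith [norm_nonneg x, norm_nonneg y])]
      · rw [max_eq_left h, max_eq_left (by nlinarith [norm_nonneg x, norm_nonneg y])]
    have hfin : ‖x + y‖ * ‖x + y‖ ≤ max ‖x‖ ‖y‖ * max ‖x‖ ‖y‖ := by
      rw [hsum, ← hmax]; exact hub
    nlinarith [norm_nonneg (x + y), le_trans (norm_nonneg x) (le_max_left ‖x‖ ‖y‖)]
  · exact max_le hlbx hlby
end

section
/- Let A be a (complex) C*-algebra, let x ∈ A be a partial isometry (x * star x * x = x), let y ∈ A, and suppose there exists a > 0 with ‖x + a • y‖ = 1 and ‖x - a • y‖ = 1. Then star x * y = 0 and y * star x = 0. -/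
/-- Key step: in the unitization, if `x` is a partial isometry, `z * (star x * x) = z`,
and `‖x ± z‖ ≤ 1`, then `z = 0`. -/
lemma key_step {A : Type*} [NonUnitalCStarAlgebra A]
    (x z : Unitization ℂ A) (hx : x * star x * x = x) (hz : z * (star x * x) = z)
    (h1 : ‖x + z‖ ≤ 1) (h2 : ‖x - z‖ ≤ 1) : z = 0 := by
  have hp2 : (star x * x) * (star x * x) = star x * x := by
    rw [show star x * x * (star x * x) = star x * (x * star x * x) by noncomm_ring, hx]
  have hps : star (star x * x) = star x * x := by simp [star_mul, mul_assoc]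
  have key : ∀ w : Unitization ℂ A, ‖w‖ ≤ 1 → star w * w ≤ 1 := by
    intro w hw
    rw [← CStarAlgebra.norm_le_one_iff_of_nonneg (star w * w) (star_mul_self_nonneg w)]
    rw [CStarRing.norm_star_mul_self]
    nlinarith [norm_nonneg w]
  have k1 := key _ h1
  have k2 := key _ h2
  have hsum : star (x + z) * (x + z) + star (x - z) * (x - z) ≤ 1 + 1 := add_le_add k1 k2
  have e : star (x + z) * (x + z) + star (x - z) * (x - z)
      = (star x * x + star z * z) + (star x * x + star z * z) := by
    simp only [star_add, star_sub]
    noncomm_ring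
  rw [e] at hsum
  have hconj := star_left_conjugate_le_conjugate hsum (star x * x)
  have hw : (star x * x) * (star z * z) * (star x * x) = star z * z := by
    calc (star x * x) * (star z * z) * (star x * x)
        = star (z * (star x * x)) * (z * (star x * x)) := by
          simp only [star_mul, star_star]
          noncomm_ring
      _ = star z * z := by rw [hz]
  have eL : star (star x * x) * ((star x * x + star z * z) + (star x * x + star z * z))
      * (star x * x) = ((star x * x) + star z * z) + ((star x * x) + star z * z) := by
    rw [hps]
    have expand : (star x * x) * ((star x * x + star z * z) + (star x * x + star z * z))
        * (star x * x) = ((star x * x) * (star x * x) * (star x * x)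
          + (star x * x) * (star z * z) * (star x * x))
          + ((star x * x) * (star x * x) * (star x * x)
          + (star x * x) * (star z * z) * (star x * x)) := by noncomm_ring
    rw [expand, hw, show (star x * x) * (star x * x) * (star x * x) = star x * x by
      rw [hp2, hp2]]
  have eR : star (star x * x) * (1 + 1) * (star x * x) = (star x * x) + (star x * x) := by
    rw [hps]
    rw [show (star x * x) * (1 + 1) * (star x * x)
      = (star x * x) * (star x * x) + (star x * x) * (star x * x) by noncomm_ring, hp2]
  rw [eL, eR] at hconj
  have habel : ((star x * x) + star z * z) + ((star x * x) + star z * z)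
      = ((star x * x) + (star x * x)) + (star z * z + star z * z) := by abel
  rw [habel] at hconj
  have h2w : star z * z + star z * z ≤ 0 := by
    have := (add_le_add_iff_left ((star x * x) + (star x * x))).mp
      (by simpa using hconj)
    simpa using this
  have h0w : (0 : Unitization ℂ A) ≤ star z * z := star_mul_self_nonneg z
  have hle : star z * z ≤ 0 := by
    calc star z * z = star z * z + 0 := by rw [add_zero]
      _ ≤ star z * z + star z * z := add_le_add (le_refl _) h0w
      _ ≤ 0 := h2w
  exact (CStarRing.star_mul_self_eq_zero_iff z).mp (le_antisymm hle h0w)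

lemma half {A : Type*} [NonUnitalCStarAlgebra A] (x : A) (hx : x * star x * x = x)
    (y : A) (a : ℝ) (ha : 0 < a) (h1 : ‖x + (a : ℂ) • y‖ = 1) (h2 : ‖x - (a : ℂ) • y‖ = 1) :
    y * star x = 0 := by
  set X : Unitization ℂ A := (x : Unitization ℂ A) with hXdef
  set Y : Unitization ℂ A := (y : Unitization ℂ A) with hYdef
  have hX : X * star X * X = X := by
    simp only [hXdef, ← Unitization.inr_star, ← Unitization.inr_mul, hx]
  have hp2 : (star X * X) * (star X * X) = star X * X := by
    rw [show star X * X * (star X * X) = star X * (X * star X * X) by noncomm_ring, hX]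
  have hxp : X * (star X * X) = X := by rw [← mul_assoc, hX]
  have hpnorm : ‖star X * X‖ ≤ 1 := by
    rcases eq_or_ne (star X * X) 0 with h | h
    · simp [h]
    · have hsq : ‖star X * X‖ * ‖star X * X‖ = ‖star X * X‖ := by
        conv_lhs => rw [← CStarRing.norm_star_mul_self (x := star X * X)]
        rw [show star (star X * X) * (star X * X) = (star X * X) * (star X * X) by
          simp [star_mul, mul_assoc], hp2]
      have hpos : 0 < ‖star X * X‖ := norm_pos_iff.mpr h
      nlinarith
  set z : Unitization ℂ A := (a : ℂ) • Y * (star X * X) with hzdef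
  have hzp : z * (star X * X) = z := by rw [hzdef, mul_assoc, hp2]
  have hz1 : ‖X + z‖ ≤ 1 := by
    have e : X + z = (X + (a : ℂ) • Y) * (star X * X) := by
      rw [add_mul, hxp, hzdef]
    rw [e]
    calc ‖(X + (a : ℂ) • Y) * (star X * X)‖ ≤ ‖X + (a : ℂ) • Y‖ * ‖star X * X‖ :=
        norm_mul_le _ _
      _ ≤ 1 * 1 := by
        apply mul_le_mul _ hpnorm (norm_nonneg _) zero_le_one
        rw [show X + (a : ℂ) • Y = ((x + (a : ℂ) • y : A) : Unitization ℂ A) by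
          simp [hXdef, hYdef, Unitization.inr_add, Unitization.inr_smul]]
        rw [Unitization.norm_inr, h1]
      _ = 1 := one_mul 1
  have hz2 : ‖X - z‖ ≤ 1 := by
    have e : X - z = (X - (a : ℂ) • Y) * (star X * X) := by
      rw [sub_mul, hxp, hzdef]
    rw [e]
    calc ‖(X - (a : ℂ) • Y) * (star X * X)‖ ≤ ‖X - (a : ℂ) • Y‖ * ‖star X * X‖ :=
        norm_mul_le _ _
      _ ≤ 1 * 1 := by
        apply mul_le_mul _ hpnorm (norm_nonneg _) zero_le_one
        rw [show X - (a : ℂ) • Y = ((x - (a : ℂ) • y : A) : Unitization ℂ A) by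
          simp [hXdef, hYdef, Unitization.inr_sub, Unitization.inr_smul]]
        rw [Unitization.norm_inr, h2]
      _ = 1 := one_mul 1
  have hz0 : z = 0 := key_step X z hX hzp hz1 hz2
  have hA : (a : ℂ) • (y * (star x * x)) = 0 := by
    have : z = (((a : ℂ) • (y * (star x * x)) : A) : Unitization ℂ A) := by
      simp only [hzdef, hXdef, hYdef, Unitization.inr_smul, Unitization.inr_mul,
        Unitization.inr_star, smul_mul_assoc]
    rw [this] at hz0
    exact_mod_cast (Unitization.inr_injective (R := ℂ)) (by simpa using hz0)
  have hyp : y * (star x * x) = 0 := by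
    have ha' : (a : ℂ) ≠ 0 := by
      simp only [ne_eq, Complex.ofReal_eq_zero]
      exact ha.ne'
    exact (smul_eq_zero.mp hA).resolve_left ha'
  have hxs : star x = star x * x * star x := by
    conv_lhs => rw [← hx]
    simp [star_mul, mul_assoc]
  calc y * star x = y * (star x * x * star x) := by rw [← hxs]
    _ = (y * (star x * x)) * star x := by rw [mul_assoc, mul_assoc, mul_assoc]
    _ = 0 := by rw [hyp, zero_mul]

/-- First half of the proof of Theorem 1: if `x` is a partial isometry and
`y ∈ X₁`, then the supports of `y` are orthogonal to those of `x`. -/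
theorem orthogonal_supports_of_mem_X1
    {A : Type*} [NonUnitalCStarAlgebra A] (x : A) (hx : x * star x * x = x)
    (y : A) (hy : ∃ a : ℝ, 0 < a ∧ ‖x + (a : ℂ) • y‖ = 1 ∧ ‖x - (a : ℂ) • y‖ = 1) :
    star x * y = 0 ∧ y * star x = 0 := by
  obtain ⟨a, ha, h1, h2⟩ := hy
  refine ⟨?_, half x hx y a ha h1 h2⟩
  have hx' : star x * star (star x) * star x = star x := by
    rw [star_star]
    calc star x * x * star x = star (x * star x * x) := by simp [star_mul, mul_assoc]
      _ = star x := by rw [hx]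
  have h1' : ‖star x + (a : ℂ) • star y‖ = 1 := by
    rw [show star x + (a : ℂ) • star y = star (x + (a : ℂ) • y) by
      simp [star_smul, Complex.star_def, Complex.conj_ofReal]]
    rw [norm_star, h1]
  have h2' : ‖star x - (a : ℂ) • star y‖ = 1 := by
    rw [show star x - (a : ℂ) • star y = star (x - (a : ℂ) • y) by
      simp [star_smul, Complex.star_def, Complex.conj_ofReal]]
    rw [norm_star, h2]
  have h0 : star y * x = 0 := by
    have := half (star x) hx' (star y) a ha h1' h2'
    rwa [star_star] at this
  calc star x * y = star (star y * x) := by rw [star_mul, star_star]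
    _ = 0 := by rw [h0, star_zero]
end

section
/- Let A be a (complex) C*-algebra and let x ∈ A with ‖x‖ = 1. If the ℂ-linear span of S_x = {f : A →L[ℂ] ℂ | f(x) = 1 ∧ ‖f‖ = 1} is all of the continuous dual A*, then x is an extreme point of the closed unit ball of A. -/
/-- A complex number of norm at most one appearing with positive weight in a
convex combination equal to `1` must itself be `1`. -/
lemma eq_one_of_convex_combo {a b : ℝ} {u v : ℂ} (ha : 0 < a) (hb : 0 < b)
    (hab : a + b = 1) (hu : ‖u‖ ≤ 1) (hv : ‖v‖ ≤ 1)
    (h : (a : ℂ) * u + (b : ℂ) * v = 1) : u = 1 := by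
  have hure : u.re ≤ 1 := le_trans (Complex.re_le_norm u) hu
  have hvre : v.re ≤ 1 := le_trans (Complex.re_le_norm v) hv
  have hre : a * u.re + b * v.re = 1 := by
    have := congrArg Complex.re h
    simpa using this
  have hure1 : u.re = 1 := by
    by_contra hne
    have h1 : u.re < 1 := lt_of_le_of_ne hure hne
    have : a * u.re + b * v.re < a * 1 + b * 1 := by
      have h2 : a * u.re < a * 1 := by nlinarith
      have h3 : b * v.re ≤ b * 1 := by nlinarith
      linarith
    rw [hre] at this; linarith
  have habs : ‖u‖ ≤ 1 := hu
  have hsq : u.re ^ 2 + u.im ^ 2 ≤ 1 := by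
    have := Complex.sq_norm u
    rw [Complex.normSq_apply] at this
    nlinarith [norm_nonneg u]
  have him : u.im = 0 := by nlinarith [sq_nonneg u.im]
  apply Complex.ext <;> simp [hure1, him]

/-- If `S_x` spans the continuous dual of `A`, then `x` is an extreme point of
the closed unit ball of `A`. -/
theorem extremePoint_of_span_Sx_eq_top
    {A : Type*} [NonUnitalCStarAlgebra A] (x : A) (hx : ‖x‖ = 1)
    (hspan : Submodule.span ℂ {f : A →L[ℂ] ℂ | f x = 1 ∧ ‖f‖ = 1} = ⊤) :
    x ∈ Set.extremePoints ℝ (Metric.closedBall (0 : A) 1) := by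
  constructor
  · simp [hx]
  · intro y hy z hz hseg
    obtain ⟨a, b, ha, hb, hab, hsum⟩ := hseg
    rw [Metric.mem_closedBall, dist_zero_right] at hy hz
    -- every element of S_x takes value 1 on y and on z
    have key : ∀ f : A →L[ℂ] ℂ, f x = 1 ∧ ‖f‖ = 1 → f y = 1 ∧ f z = 1 := by
      rintro f ⟨hfx, hfn⟩
      have hfy : ‖f y‖ ≤ 1 := by
        calc ‖f y‖ ≤ ‖f‖ * ‖y‖ := f.le_opNorm y
        _ ≤ 1 := by rw [hfn]; simpa using hy
      have hfz : ‖f z‖ ≤ 1 := by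
        calc ‖f z‖ ≤ ‖f‖ * ‖z‖ := f.le_opNorm z
        _ ≤ 1 := by rw [hfn]; simpa using hz
      have hcombo : (a : ℂ) * f y + (b : ℂ) * f z = 1 := by
        have : f (a • y + b • z) = 1 := by rw [hsum, hfx]
        rw [map_add, f.map_smul_of_tower, f.map_smul_of_tower] at this
        simpa [Complex.real_smul] using this
      have hcombo' : (b : ℂ) * f z + (a : ℂ) * f y = 1 := by
        rw [add_comm] at hcombo; exact hcombo
      exact ⟨eq_one_of_convex_combo ha hb hab hfy hfz hcombo,
        eq_one_of_convex_combo hb ha (by linarith) hfz hfy hcombo'⟩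
    -- hence every continuous functional kills y - x and z - x
    have kill : ∀ w : A, (∀ f : A →L[ℂ] ℂ, f x = 1 ∧ ‖f‖ = 1 → f w = 1) →
        w = x := by
      intro w hw
      have hle : Submodule.span ℂ {f : A →L[ℂ] ℂ | f x = 1 ∧ ‖f‖ = 1} ≤
          LinearMap.ker (ContinuousLinearMap.apply ℂ ℂ (w - x) : (A →L[ℂ] ℂ) →ₗ[ℂ] ℂ) := by
        rw [Submodule.span_le]
        rintro f hf
        simp only [SetLike.mem_coe, LinearMap.mem_ker,
          ContinuousLinearMap.coe_coe, ContinuousLinearMap.apply_apply]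
        rw [map_sub, hw f hf, hf.1, sub_self]
      rw [hspan, top_le_iff] at hle
      have hall : ∀ f : A →L[ℂ] ℂ, f (w - x) = 0 := by
        intro f
        have : f ∈ LinearMap.ker (ContinuousLinearMap.apply ℂ ℂ (w - x) : (A →L[ℂ] ℂ) →ₗ[ℂ] ℂ) := by
          rw [hle]; trivial
        simpa using this
      have hwx : w - x = 0 := by
        by_contra hne
        obtain ⟨f, hf⟩ := exists_dual_vector ℂ (w - x) (norm_ne_zero_iff.mpr hne)
        have h0 := hall f
        rw [hf.2] at h0
        exact hne (norm_eq_zero.mp (Complex.ofReal_eq_zero.mp h0))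
      exact sub_eq_zero.mp hwx
    exact kill y (fun f hf => (key f hf).1)
end

section
/- Let A be a unital (complex) C*-algebra, let x ∈ A be a partial isometry (x * star x * x = x) with star x * x ≠ 1, and let f : A → ℂ be a continuous linear functional with ‖f‖ = 1 and f(x) = 1. Then f(1 - star x * x) = 0. -/
/-- Key step of Theorem 2: a norm-one functional attaining its norm at a
non-unitary partial isometry annihilates `1 - star x * x`. -/
theorem apply_one_sub_star_mul_self_eq_zero
    {A : Type*} [CStarAlgebra A] (x : A) (hx : x * star x * x = x)
    (hne : star x * x ≠ 1) (f : A →L[ℂ] ℂ) (hf : ‖f‖ = 1) (hfx : f x = 1) :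
    f (1 - star x * x) = 0 := by
  by_contra hc
  set q : A := 1 - star x * x with hq
  -- basic algebraic facts
  have hx' : star x * x * star x = star x := by
    have := congrArg star hx
    simpa [star_mul, mul_assoc] using this
  have hq_sa : star q = q := by
    simp [hq, star_sub, star_mul, star_star]
  have hxq : x * q = 0 := by
    simp [hq, mul_sub, ← mul_assoc, hx]
  have hqx : q * star x = 0 := by
    have : star (x * q) = 0 := by rw [hxq, star_zero]
    simpa [star_mul, hq_sa] using this
  have hpp : (star x * x) * (star x * x) = star x * x := by
    calc (star x * x) * (star x * x) = (star x * x * star x) * x := by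
          rw [mul_assoc, mul_assoc, mul_assoc]
      _ = star x * x := by rw [hx']
  have hqq : q * q = q := by
    simp only [hq, sub_mul, mul_sub, one_mul, mul_one, hpp]
    abel
  -- norm bounds: projections have norm at most one
  have hnormq : ‖q‖ ≤ 1 := by
    have h1 : ‖star q * q‖ = ‖q‖ * ‖q‖ := CStarRing.norm_star_mul_self
    rw [hq_sa, hqq] at h1
    nlinarith [norm_nonneg q]
  have hnormp : ‖star x * x‖ ≤ 1 := by
    have hsa : star (star x * x) = star x * x := by simp [star_mul, star_star]
    have h1 : ‖star (star x * x) * (star x * x)‖ = ‖star x * x‖ * ‖star x * x‖ :=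
      CStarRing.norm_star_mul_self
    rw [hsa, hpp] at h1
    nlinarith [norm_nonneg (star x * x)]
  have hnormx : ‖x‖ ≤ 1 := by
    have h1 : ‖star x * x‖ = ‖x‖ * ‖x‖ := CStarRing.norm_star_mul_self
    nlinarith [norm_nonneg x]
  -- the test element
  set c : ℂ := f q with hcq
  have hc0 : c ≠ 0 := hc
  set y : A := x + (starRingEnd ℂ c) • q with hy
  have hstary : star y = star x + c • q := by
    simp [hy, star_add, star_smul, hq_sa, Complex.star_def]
  have hyy : y * star y = x * star x + (starRingEnd ℂ c * c) • q := by
    rw [hy, hstary]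
    simp only [add_mul, mul_add, mul_smul_comm, smul_mul_assoc, hxq, hqx, hqq,
      smul_zero, zero_add, add_zero, smul_smul]
    rw [mul_comm c]
  have hcc : starRingEnd ℂ c * c = ((‖c‖ ^ 2 : ℝ) : ℂ) := by
    rw [← Complex.normSq_eq_conj_mul_self, Complex.normSq_eq_norm_sq]
  -- norm of y squared
  have hynorm : ‖y‖ * ‖y‖ ≤ 1 + ‖c‖ ^ 2 := by
    have h1 : ‖y * star y‖ = ‖y‖ * ‖y‖ := CStarRing.norm_self_mul_star
    rw [hyy] at h1
    have h2 : ‖x * star x + (starRingEnd ℂ c * c) • q‖ ≤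
        ‖x * star x‖ + ‖(starRingEnd ℂ c * c) • q‖ := norm_add_le _ _
    have h3 : ‖x * star x‖ = ‖x‖ * ‖x‖ := CStarRing.norm_self_mul_star
    have h4 : ‖(starRingEnd ℂ c * c) • q‖ = ‖starRingEnd ℂ c * c‖ * ‖q‖ := norm_smul _ _
    have h5 : ‖starRingEnd ℂ c * c‖ = ‖c‖ ^ 2 := by
      rw [hcc, Complex.norm_real, Real.norm_eq_abs, abs_of_nonneg (by positivity)]
    have h6 : ‖c‖ ^ 2 * ‖q‖ ≤ ‖c‖ ^ 2 := mul_le_of_le_one_right (sq_nonneg _) hnormq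
    nlinarith [norm_nonneg x, norm_nonneg q, sq_nonneg (‖c‖)]
  -- value of f at y
  have hfy : f y = ((1 + ‖c‖ ^ 2 : ℝ) : ℂ) := by
    rw [hy, map_add, map_smul, hfx, ← hcq, smul_eq_mul, hcc]
    push_cast
    ring
  have hfyn : ‖f y‖ = 1 + ‖c‖ ^ 2 := by
    rw [hfy, Complex.norm_real, Real.norm_eq_abs, abs_of_nonneg (by positivity)]
  have hle : ‖f y‖ ≤ ‖y‖ := by
    calc ‖f y‖ ≤ ‖f‖ * ‖y‖ := f.le_opNorm y
      _ = ‖y‖ := by rw [hf, one_mul]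
  have hcpos : 0 < ‖c‖ := norm_pos_iff.mpr hc0
  nlinarith [norm_nonneg y, hle, hfyn, hynorm, sq_nonneg (‖c‖)]
end

section
/- Let A be a unital (complex) C*-algebra and let x ∈ A. Then x is invertible (x is a unit of A) if and only if there exist a unitary u ∈ A and ε > 0 such that every continuous linear functional f : A → ℂ with ‖f‖ = 1 and f(u) = 1 satisfies: f(x) is real and ε ≤ Re(f(x)). -/
open Complex ComplexStarModule

namespace Thm4Aux

variable {A : Type*} [CStarAlgebra A] [Nontrivial A]

lemma im_eq_zero (f : A →L[ℂ] ℂ) (hf : ‖f‖ ≤ 1) (h1 : f 1 = 1)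
    {a : A} (ha : IsSelfAdjoint a) : (f a).im = 0 := by
  have key : ∀ t : ℝ, (f a).re ^ 2 + ((f a).im + t) ^ 2 ≤ ‖a‖ ^ 2 + t ^ 2 := by
    intro t
    set z : ℂ := (t : ℂ) * Complex.I with hz
    have hstarz : star z = -z := by
      simp only [hz, star_mul', Complex.star_def, Complex.conj_I, Complex.conj_ofReal]
      ring
    set b : A := a + z • 1 with hb
    have hsb : star b = a + (-z) • 1 := by
      rw [hb, star_add, star_smul, star_one, ha.star_eq, hstarz]
    have hzz : (-z) * z = ((t ^ 2 : ℝ) : ℂ) := by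
      rw [hz]; push_cast; ring_nf; rw [Complex.I_sq]; ring
    have hbb : star b * b = a * a + ((t ^ 2 : ℝ) : ℂ) • 1 := by
      rw [hsb, hb]
      have hexp : (a + (-z) • 1) * (a + z • 1)
          = a * a + (z • a + (-z) • a) + ((-z) * z) • 1 := by
        simp only [add_mul, mul_add, smul_add, smul_mul_assoc, mul_smul_comm, one_mul, mul_one, smul_smul]
        rw [show z * -z = -z * z from by ring]
        abel
      rw [hexp, hzz, neg_smul, add_neg_cancel, add_zero]
    have hnb : ‖b‖ ^ 2 ≤ ‖a‖ ^ 2 + t ^ 2 := by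
      have h2 : ‖b‖ * ‖b‖ = ‖star b * b‖ := (CStarRing.norm_star_mul_self).symm
      have h3 : ‖star b * b‖ ≤ ‖a‖ * ‖a‖ + t ^ 2 := by
        rw [hbb]
        refine (norm_add_le _ _).trans ?_
        have hn1 : ‖(((t ^ 2 : ℝ) : ℂ)) • (1 : A)‖ ≤ t ^ 2 := by
          rw [norm_smul, norm_one, mul_one]
          simp [_root_.abs_of_nonneg (sq_nonneg t)]
        have := norm_mul_le a a
        linarith
      nlinarith [norm_nonneg b]
    have hfb : f b = f a + z := by
      rw [hb, map_add, map_smul, h1, smul_eq_mul, mul_one]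
    have hfble : ‖f b‖ ≤ ‖b‖ := by
      calc ‖f b‖ ≤ ‖f‖ * ‖b‖ := f.le_opNorm b
        _ ≤ 1 * ‖b‖ := by gcongr
        _ = ‖b‖ := one_mul _
    have hsq : ‖f b‖ ^ 2 = (f a).re ^ 2 + ((f a).im + t) ^ 2 := by
      rw [hfb, Complex.sq_norm, Complex.normSq_apply]
      simp [hz]
      ring
    nlinarith [norm_nonneg (f b), norm_nonneg b]
  by_contra him
  have h2 := key ((‖a‖ ^ 2 + 1) / (2 * (f a).im))
  have h3 : 2 * (f a).im * ((‖a‖ ^ 2 + 1) / (2 * (f a).im)) = ‖a‖ ^ 2 + 1 := by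
    field_simp
  nlinarith [sq_nonneg (f a).re, sq_nonneg (f a).im]

lemma algebraMap_eq (r : ℝ) : algebraMap ℝ A r = ((r : ℂ)) • (1 : A) := by
  rw [IsScalarTower.algebraMap_apply ℝ ℂ A, Algebra.algebraMap_eq_smul_one]
  norm_num

section Order
variable [PartialOrder A] [StarOrderedRing A]

lemma nonneg_re (f : A →L[ℂ] ℂ) (hf : ‖f‖ ≤ 1) (h1 : f 1 = 1)
    {a : A} (ha : 0 ≤ a) : (f a).im = 0 ∧ 0 ≤ (f a).re := by
  have hsa : IsSelfAdjoint a := IsSelfAdjoint.of_nonneg ha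
  have him := im_eq_zero f hf h1 hsa
  refine ⟨him, ?_⟩
  have h1a : a ≤ algebraMap ℝ A ‖a‖ := hsa.le_algebraMap_norm_self
  have hb0 : 0 ≤ algebraMap ℝ A ‖a‖ - a := sub_nonneg.mpr h1a
  have hble : algebraMap ℝ A ‖a‖ - a ≤ algebraMap ℝ A ‖a‖ := sub_le_self _ ha
  have hnb : ‖algebraMap ℝ A ‖a‖ - a‖ ≤ ‖a‖ := by
    refine (CStarAlgebra.norm_le_norm_of_nonneg_of_le hb0 hble).trans ?_
    rw [algebraMap_eq, norm_smul, norm_one, mul_one]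
    simp
  have hfb : f (algebraMap ℝ A ‖a‖ - a) = ((‖a‖ : ℂ)) - f a := by
    rw [map_sub, algebraMap_eq, map_smul, h1, smul_eq_mul, mul_one]
  have hle : ‖((‖a‖ : ℂ)) - f a‖ ≤ ‖a‖ := by
    rw [← hfb]
    calc ‖f _‖ ≤ ‖f‖ * ‖algebraMap ℝ A ‖a‖ - a‖ := f.le_opNorm _
      _ ≤ 1 * ‖a‖ := by gcongr
      _ = ‖a‖ := one_mul _
  have hsq : ‖((‖a‖ : ℂ)) - f a‖ ^ 2 = (‖a‖ - (f a).re) ^ 2 + ((f a).im) ^ 2 := by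
    rw [Complex.sq_norm, Complex.normSq_apply]
    simp
    ring
  nlinarith [norm_nonneg ((((‖a‖ : ℝ) : ℂ)) - f a), norm_nonneg a, sq_nonneg (f a).re]

end Order

lemma star_apply (f : A →L[ℂ] ℂ) (hf : ‖f‖ ≤ 1) (h1 : f 1 = 1) (c : A) :
    f (star c) = (starRingEnd ℂ) (f c) := by
  have hc := realPart_add_I_smul_imaginaryPart c
  have hsh : IsSelfAdjoint ((ℜ c : A)) := (ℜ c).2
  have hsk : IsSelfAdjoint ((ℑ c : A)) := (ℑ c).2
  have hfh : (starRingEnd ℂ) (f (ℜ c : A)) = f (ℜ c : A) :=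
    Complex.conj_eq_iff_im.mpr (im_eq_zero f hf h1 hsh)
  have hfk : (starRingEnd ℂ) (f (ℑ c : A)) = f (ℑ c : A) :=
    Complex.conj_eq_iff_im.mpr (im_eq_zero f hf h1 hsk)
  have hstar : star c = (ℜ c : A) - Complex.I • (ℑ c : A) := by
    conv_lhs => rw [← hc]
    rw [star_add, hsh.star_eq, star_smul, hsk.star_eq, Complex.star_def, Complex.conj_I,
      neg_smul, ← sub_eq_add_neg]
  rw [hstar, map_sub, map_smul, smul_eq_mul]
  conv_rhs => rw [← hc]
  rw [map_add, map_smul, smul_eq_mul, map_add, map_mul, Complex.conj_I, hfh, hfk]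
  ring

section Order2
variable [PartialOrder A] [StarOrderedRing A]

lemma zero_of_star_mul_self (f : A →L[ℂ] ℂ) (hf : ‖f‖ ≤ 1) (h1 : f 1 = 1)
    {c : A} (hc : f (star c * c) = 0) : f c = 0 := by
  have key : ∀ t : ℝ, 0 ≤ 1 - 2 * t * Complex.normSq (f c) := by
    intro t
    set l : ℂ := -(t : ℂ) * (starRingEnd ℂ) (f c) with hl
    set b : A := 1 + l • c with hb
    have hbb : star b * b
        = 1 + l • c + (starRingEnd ℂ) l • star c + ((starRingEnd ℂ) l * l) • (star c * c) := by
      simp only [hb, star_add, star_one, star_smul, Complex.star_def, add_mul, mul_add,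
        one_mul, mul_one, smul_mul_smul_comm]
      abel
    have hfb : f (star b * b) = 1 + (l * f c + (starRingEnd ℂ) (l * f c)) := by
      rw [hbb, map_add, map_add, map_add, map_smul, map_smul, map_smul, h1, hc,
        star_apply f hf h1 c]
      simp only [smul_eq_mul, mul_zero, add_zero, map_mul]
      ring
    have hval : l * f c = ((-(t * Complex.normSq (f c)) : ℝ) : ℂ) := by
      have hmc : (starRingEnd ℂ) (f c) * f c = ((Complex.normSq (f c) : ℝ) : ℂ) := by
        rw [mul_comm, Complex.mul_conj]
      rw [hl, mul_assoc, hmc]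
      push_cast
      ring
    obtain ⟨him, hre⟩ := nonneg_re f hf h1 (star_mul_self_nonneg b)
    rw [hfb, hval] at hre
    simp only [Complex.conj_ofReal, Complex.add_re, Complex.one_re, Complex.ofReal_re] at hre
    linarith
  by_contra h0
  have hpos : 0 < Complex.normSq (f c) := by
    have := Complex.normSq_pos.mpr h0
    exact this
  have hk := key (1 / Complex.normSq (f c))
  have h2 : (1 / Complex.normSq (f c)) * Complex.normSq (f c) = 1 :=
    one_div_mul_cancel (ne_of_gt hpos)
  nlinarith

end Order2

lemma exists_functional {c : A} (hc : ¬ IsUnit c) :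
    ∃ f : A →L[ℂ] ℂ, ‖f‖ ≤ 1 ∧ f 1 = 1 ∧ f c = 0 := by
  set S : Submodule ℂ A := Submodule.span ℂ {c} with hS
  haveI : IsClosed (S : Set A) := S.closed_of_finiteDimensional
  set q : A ⧸ S := Submodule.Quotient.mk 1 with hq
  have hq1 : 1 ≤ ‖q‖ := by
    by_contra hlt
    push_neg at hlt
    obtain ⟨m, hm, hmlt⟩ := Submodule.Quotient.norm_mk_lt q (by linarith : (0:ℝ) < 1 - ‖q‖)
    have hmem : m - 1 ∈ S := by
      rw [← Submodule.Quotient.eq]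
      exact hm
    obtain ⟨β, hβ⟩ := Submodule.mem_span_singleton.mp hmem
    have hone : (1 : ℂ) ∈ spectrum ℂ m := by
      rw [spectrum.mem_iff]
      intro hu
      have he : algebraMap ℂ A 1 - m = -(β • c) := by
        rw [map_one, hβ, neg_sub]
      rw [he] at hu
      have hu2 : IsUnit (β • c) := by simpa using hu.neg
      rcases eq_or_ne β 0 with h0 | h0
      · rw [h0, zero_smul] at hu2
        exact not_isUnit_zero hu2
      · have hβu : IsUnit (algebraMap ℂ A β) :=
          (isUnit_iff_ne_zero.mpr h0).map (algebraMap ℂ A)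
        rw [Algebra.smul_def] at hu2
        obtain ⟨v, hv⟩ := hβu
        rw [← hv] at hu2
        exact hc ((Units.isUnit_units_mul v c).mp hu2)
    have hge := spectrum.norm_le_norm_of_mem hone
    rw [norm_one] at hge
    linarith
  have hq0 : q ≠ 0 := by
    intro h
    rw [h, norm_zero] at hq1
    linarith
  obtain ⟨g, hg1, hgq⟩ := exists_dual_vector ℂ q (norm_ne_zero_iff.mpr hq0)
  set f0 : A →ₗ[ℂ] ℂ := g.toLinearMap.comp S.mkQ with hf0
  have hf0bound : ∀ y : A, ‖f0 y‖ ≤ 1 * ‖y‖ := by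
    intro y
    calc ‖f0 y‖ = ‖g (Submodule.Quotient.mk y)‖ := rfl
      _ ≤ ‖g‖ * ‖(Submodule.Quotient.mk y : A ⧸ S)‖ := g.le_opNorm _
      _ ≤ 1 * ‖y‖ := by
          rw [hg1]
          gcongr
          exact Submodule.Quotient.norm_mk_le S y
  set F : A →L[ℂ] ℂ := f0.mkContinuous 1 hf0bound with hFdef
  have hFle : ‖F‖ ≤ 1 := f0.mkContinuous_norm_le one_pos.le hf0bound
  have hF1 : F 1 = ((‖q‖ : ℝ) : ℂ) := hgq
  have hFc : F c = 0 := by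
    show g (Submodule.Quotient.mk c) = 0
    rw [show (Submodule.Quotient.mk c : A ⧸ S) = 0 from
      (Submodule.Quotient.mk_eq_zero _).mpr (Submodule.mem_span_singleton_self c), map_zero]
  have hnq : (0:ℝ) < ‖q‖ := lt_of_lt_of_le one_pos hq1
  refine ⟨((‖q‖ : ℝ) : ℂ)⁻¹ • F, ?_, ?_, ?_⟩
  · refine (norm_smul_le ((((‖q‖ : ℝ) : ℂ))⁻¹) F).trans ?_
    calc ‖(((‖q‖ : ℝ) : ℂ))⁻¹‖ * ‖F‖ ≤ ‖(((‖q‖ : ℝ) : ℂ))⁻¹‖ * 1 := by gcongr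
      _ = ‖q‖⁻¹ := by
          rw [mul_one, norm_inv, Complex.norm_real, Real.norm_eq_abs, abs_of_pos hnq]
      _ ≤ 1 := by
          rw [inv_le_one_iff₀]
          right; exact hq1
  · rw [ContinuousLinearMap.smul_apply, hF1, smul_eq_mul, inv_mul_cancel₀]
    exact_mod_cast ne_of_gt hnq
  · rw [ContinuousLinearMap.smul_apply, hFc, smul_zero]

lemma isUnit_of_both {x : A} (h1 : IsUnit (star x * x)) (h2 : IsUnit (x * star x)) :
    IsUnit x := by
  obtain ⟨v, hv⟩ := h1
  obtain ⟨w, hw⟩ := h2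
  set b : A := ↑v⁻¹ * star x with hbdef
  set d : A := star x * ↑w⁻¹ with hddef
  have hbx : b * x = 1 := by
    rw [hbdef, mul_assoc, ← hv, v.inv_mul]
  have hxd : x * d = 1 := by
    rw [hddef, ← mul_assoc, ← hw, w.mul_inv]
  have hbd : b = d := by
    calc b = b * (x * d) := by rw [hxd, mul_one]
      _ = (b * x) * d := by rw [← mul_assoc]
      _ = d := by rw [hbx, one_mul]
  exact ⟨⟨x, b, by rw [hbd]; exact hxd, hbx⟩, rfl⟩

end Thm4Aux

/-- Theorem 4 (dual-space form): `x` is invertible iff there exist a unitary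
`u` and `ε > 0` such that `f x ≥ ε` for every `f ∈ S_u`. -/
theorem isUnit_iff_exists_unitary_Su
    {A : Type*} [CStarAlgebra A] (x : A) :
    IsUnit x ↔
      ∃ u ∈ unitary A, ∃ ε : ℝ, 0 < ε ∧
        ∀ f : A →L[ℂ] ℂ, ‖f‖ = 1 → f u = 1 → (f x).im = 0 ∧ ε ≤ (f x).re := by
  rcases subsingleton_or_nontrivial A with hA | hA
  · constructor
    · intro _
      refine ⟨1, one_mem _, 1, one_pos, fun f hf hfu => ?_⟩
      exfalso
      rw [show (1 : A) = 0 from Subsingleton.elim _ _, map_zero] at hfu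
      exact one_ne_zero hfu.symm
    · intro _
      exact isUnit_of_subsingleton x
  · letI := CStarAlgebra.spectralOrder A
    haveI := CStarAlgebra.spectralOrderedRing A
    constructor
    · intro hx
      have hxx : (0:A) ≤ star x * x := star_mul_self_nonneg x
      have hsx : IsUnit (star x * x) := hx.star.mul hx
      set p : A := CFC.sqrt (star x * x) with hpdef
      have hp_nonneg : 0 ≤ p := CFC.sqrt_nonneg (a := star x * x)
      have hp_sa : IsSelfAdjoint p := IsSelfAdjoint.of_nonneg hp_nonneg
      have hp2 : p * p = star x * x := by
        have := CFC.sq_sqrt (star x * x) hxx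
        rwa [sq] at this
      have hp_unit : IsUnit p := by
        obtain ⟨V, hV⟩ := hsx
        have hcomm : Commute p ↑V := by
          rw [← hp2] at hV
          rw [hV]
          exact (Commute.refl p).mul_right (Commute.refl p)
        have hcomm' : Commute p ↑V⁻¹ := hcomm.units_inv_right
        refine ⟨⟨p, ↑V⁻¹ * p, ?_, ?_⟩, rfl⟩
        · calc p * (↑V⁻¹ * p) = (p * ↑V⁻¹) * p := by rw [mul_assoc]
            _ = (↑V⁻¹ * p) * p := by rw [hcomm'.eq]
            _ = ↑V⁻¹ * (p * p) := by rw [mul_assoc]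
            _ = ↑V⁻¹ * ↑V := by rw [hp2, hV]
            _ = 1 := V.inv_mul
        · calc (↑V⁻¹ * p) * p = ↑V⁻¹ * (p * p) := by rw [mul_assoc]
            _ = ↑V⁻¹ * ↑V := by rw [hp2, hV]
            _ = 1 := V.inv_mul
      obtain ⟨P, hP⟩ := hp_unit
      have hPp : p * ↑P⁻¹ = 1 := by rw [← hP]; exact P.mul_inv
      have hpP : (↑P⁻¹ : A) * p = 1 := by rw [← hP]; exact P.inv_mul
      have hPinv_sa : star (↑P⁻¹ : A) = ↑P⁻¹ := by
        have h3 : star (↑P⁻¹ : A) * p = 1 := by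
          have := congrArg star hPp
          rwa [star_mul, hp_sa.star_eq, star_one] at this
        calc star (↑P⁻¹ : A) = star (↑P⁻¹ : A) * (p * ↑P⁻¹) := by rw [hPp, mul_one]
          _ = (star (↑P⁻¹ : A) * p) * ↑P⁻¹ := by rw [mul_assoc]
          _ = ↑P⁻¹ := by rw [h3, one_mul]
      set u : A := x * ↑P⁻¹ with hudef
      have hu_star : star u = ↑P⁻¹ * star x := by
        rw [hudef, star_mul, hPinv_sa]
      have huu : star u * u = 1 := by
        rw [hu_star, hudef]
        calc (↑P⁻¹ : A) * star x * (x * ↑P⁻¹) = ↑P⁻¹ * ((star x * x) * ↑P⁻¹) := by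
              rw [mul_assoc, mul_assoc]
          _ = ↑P⁻¹ * (p * (p * ↑P⁻¹)) := by rw [← hp2, mul_assoc]
          _ = (↑P⁻¹ * p) * (p * ↑P⁻¹) := by rw [← mul_assoc]
          _ = 1 := by rw [hpP, hPp, one_mul]
      have huu' : u * star u = 1 := by
        rw [hu_star, hudef]
        obtain ⟨Y, hY⟩ := hx.star
        have hkey : star x * (x * ((↑P⁻¹ : A) * ↑P⁻¹)) = 1 := by
          calc star x * (x * ((↑P⁻¹ : A) * ↑P⁻¹)) = (star x * x) * ((↑P⁻¹ : A) * ↑P⁻¹) := by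
                rw [mul_assoc]
            _ = p * ((p * ↑P⁻¹) * ↑P⁻¹) := by rw [← hp2, mul_assoc, mul_assoc]
            _ = p * (1 * ↑P⁻¹) := by rw [hPp]
            _ = 1 := by rw [one_mul, hPp]
        have hxw : x * ((↑P⁻¹ : A) * ↑P⁻¹) = ↑Y⁻¹ := by
          calc x * ((↑P⁻¹ : A) * ↑P⁻¹)
              = (↑Y⁻¹ * ↑Y) * (x * ((↑P⁻¹ : A) * ↑P⁻¹)) := by rw [Y.inv_mul, one_mul]
            _ = ↑Y⁻¹ * (star x * (x * ((↑P⁻¹ : A) * ↑P⁻¹))) := by rw [mul_assoc, hY]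
            _ = ↑Y⁻¹ := by rw [hkey, mul_one]
        calc x * ↑P⁻¹ * ((↑P⁻¹ : A) * star x)
            = (x * ((↑P⁻¹ : A) * ↑P⁻¹)) * star x := by
              rw [mul_assoc, ← mul_assoc (↑P⁻¹ : A) (↑P⁻¹ : A) (star x),
                ← mul_assoc x ((↑P⁻¹ : A) * ↑P⁻¹) (star x)]
          _ = ↑Y⁻¹ * star x := by rw [hxw]
          _ = ↑Y⁻¹ * ↑Y := by rw [hY]
          _ = 1 := Y.inv_mul
      have hu_mem : u ∈ unitary A := Unitary.mem_iff.mpr ⟨huu, huu'⟩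
      have hup : u * p = x := by
        rw [hudef, mul_assoc, hpP, mul_one]
      have hsp : ∀ r ∈ spectrum ℝ p, 0 < r := by
        intro r hr
        refine lt_of_le_of_ne (spectrum_nonneg_of_nonneg hp_nonneg hr) ?_
        intro h0
        exact spectrum.zero_notMem ℝ ⟨P, hP⟩ (h0 ▸ hr)
      obtain ⟨ε, hε, hεp⟩ := (CFC.exists_pos_algebraMap_le_iff hp_sa).mpr hsp
      refine ⟨u, hu_mem, ε, hε, fun f hf hfu => ?_⟩
      set g0 : A →ₗ[ℂ] ℂ := f.toLinearMap.comp (LinearMap.mulLeft ℂ u) with hg0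
      have hu1 : ‖u‖ = 1 := CStarRing.norm_of_mem_unitary hu_mem
      have hgb : ∀ y : A, ‖g0 y‖ ≤ 1 * ‖y‖ := by
        intro y
        calc ‖g0 y‖ = ‖f (u * y)‖ := rfl
          _ ≤ ‖f‖ * ‖u * y‖ := f.le_opNorm _
          _ ≤ 1 * (‖u‖ * ‖y‖) := by rw [hf]; gcongr; exact norm_mul_le u y
          _ = 1 * ‖y‖ := by rw [hu1, one_mul]
      set g : A →L[ℂ] ℂ := g0.mkContinuous 1 hgb with hgdef
      have hg_le : ‖g‖ ≤ 1 := g0.mkContinuous_norm_le one_pos.le hgb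
      have hg1 : g 1 = 1 := by
        show f (u * 1) = 1
        rw [mul_one, hfu]
      have hgx : g p = f x := by
        show f (u * p) = f x
        rw [hup]
      have hd0 : 0 ≤ p - algebraMap ℝ A ε := sub_nonneg.mpr hεp
      obtain ⟨him, hre⟩ := Thm4Aux.nonneg_re g hg_le hg1 hd0
      have hgp : g p = g (p - algebraMap ℝ A ε) + ((ε : ℝ) : ℂ) := by
        have hms : g (p - algebraMap ℝ A ε) = g p - g (algebraMap ℝ A ε) := map_sub g _ _
        have hgε : g (algebraMap ℝ A ε) = ((ε : ℝ) : ℂ) := by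
          rw [Thm4Aux.algebraMap_eq, map_smul, hg1, smul_eq_mul, mul_one]
        rw [hms, hgε]
        ring
      constructor
      · rw [← hgx, hgp]
        simp only [Complex.add_im, Complex.ofReal_im, him, add_zero]
      · rw [← hgx, hgp]
        simp only [Complex.add_re, Complex.ofReal_re]
        linarith
    · rintro ⟨u, hu, ε, hε, hS⟩
      by_contra hx
      have hcase : ¬ IsUnit (star x * x) ∨ ¬ IsUnit (x * star x) := by
        by_contra h
        push_neg at h
        exact hx (Thm4Aux.isUnit_of_both h.1 h.2)
      obtain ⟨huu, huu'⟩ := Unitary.mem_iff.mp hu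
      have hu1 : ‖u‖ = 1 := CStarRing.norm_of_mem_unitary hu
      have hsu : ‖star u‖ = 1 := by rw [norm_star, hu1]
      rcases hcase with hcc | hcc
      · obtain ⟨φ, hφle, hφ1, hφc⟩ := Thm4Aux.exists_functional hcc
        set f0 : A →ₗ[ℂ] ℂ := φ.toLinearMap.comp (LinearMap.mulLeft ℂ (star u)) with hf0
        have hfb : ∀ y : A, ‖f0 y‖ ≤ 1 * ‖y‖ := by
          intro y
          calc ‖f0 y‖ = ‖φ (star u * y)‖ := rfl
            _ ≤ ‖φ‖ * ‖star u * y‖ := φ.le_opNorm _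
            _ ≤ 1 * (‖star u‖ * ‖y‖) := by gcongr; exact norm_mul_le _ _
            _ = 1 * ‖y‖ := by rw [hsu, one_mul]
        set f : A →L[ℂ] ℂ := f0.mkContinuous 1 hfb with hfdef
        have hfle : ‖f‖ ≤ 1 := f0.mkContinuous_norm_le one_pos.le hfb
        have hfu : f u = 1 := by
          show φ (star u * u) = 1
          rw [huu, hφ1]
        have hfnorm : ‖f‖ = 1 := by
          refine le_antisymm hfle ?_
          have h4 : ‖f u‖ ≤ ‖f‖ * ‖u‖ := f.le_opNorm u
          rw [hfu, hu1, mul_one] at h4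
          simpa using h4
        have hfx : f x = 0 := by
          show φ (star u * x) = 0
          have hcc2 : φ (star (star u * x) * (star u * x)) = 0 := by
            have hce : star (star u * x) * (star u * x) = star x * x := by
              rw [star_mul, star_star, mul_assoc, ← mul_assoc u (star u) x, huu', one_mul]
            rw [hce, hφc]
          exact Thm4Aux.zero_of_star_mul_self φ hφle hφ1 hcc2
        obtain ⟨_, hre⟩ := hS f hfnorm hfu
        rw [hfx] at hre
        simp only [Complex.zero_re] at hre
        linarith
      · obtain ⟨φ, hφle, hφ1, hφc⟩ := Thm4Aux.exists_functional hcc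
        set f0 : A →ₗ[ℂ] ℂ := φ.toLinearMap.comp (LinearMap.mulRight ℂ (star u)) with hf0
        have hfb : ∀ y : A, ‖f0 y‖ ≤ 1 * ‖y‖ := by
          intro y
          calc ‖f0 y‖ = ‖φ (y * star u)‖ := rfl
            _ ≤ ‖φ‖ * ‖y * star u‖ := φ.le_opNorm _
            _ ≤ 1 * (‖y‖ * ‖star u‖) := by gcongr; exact norm_mul_le _ _
            _ = 1 * ‖y‖ := by rw [hsu, mul_one]
        set f : A →L[ℂ] ℂ := f0.mkContinuous 1 hfb with hfdef
        have hfle : ‖f‖ ≤ 1 := f0.mkContinuous_norm_le one_pos.le hfb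
        have hfu : f u = 1 := by
          show φ (u * star u) = 1
          rw [huu', hφ1]
        have hfnorm : ‖f‖ = 1 := by
          refine le_antisymm hfle ?_
          have h4 : ‖f u‖ ≤ ‖f‖ * ‖u‖ := f.le_opNorm u
          rw [hfu, hu1, mul_one] at h4
          simpa using h4
        have hfx : f x = 0 := by
          show φ (x * star u) = 0
          have hstarc : star (u * star x) = x * star u := by
            rw [star_mul, star_star]
          have hcc2 : φ (star (u * star x) * (u * star x)) = 0 := by
            have hce : star (u * star x) * (u * star x) = x * star x := by
              rw [hstarc, mul_assoc, ← mul_assoc (star u) u (star x), huu, one_mul]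
            rw [hce, hφc]
          have hc0 : φ (u * star x) = 0 :=
            Thm4Aux.zero_of_star_mul_self φ hφle hφ1 hcc2
          rw [← hstarc, Thm4Aux.star_apply φ hφle hφ1 (u * star x), hc0, map_zero]
        obtain ⟨_, hre⟩ := hS f hfnorm hfu
        rw [hfx] at hre
        simp only [Complex.zero_re] at hre
        linarith
end
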